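/- Let D₁ and D₂ be oriented graphs with inv(D₁) = 2 and inv(D₂) = k. Then inv(D₁ → D₂) ≥ k + 1. -/

import Mathlib

/-- A (simple) oriented graph: no loops, at most one arc between two vertices. -/
structure OGraph (V : Type) where
  adj : V → V → Prop
  loopless : ∀ v, ¬ adj v v
  asymm : ∀ u v, adj u v → ¬ adj v u

namespace OGraph

variable {V V₁ V₂ V₃ : Type}

/-- Inversion of a set `X`: reverse every arc with both ends in `X`. -/
def invert (D : OGraph V) (X : Set V) : OGraph V where
  adj u v := (u ∈ X ∧ v ∈ X ∧ D.adj v u) ∨ ((u ∉ X ∨ v ∉ X) ∧ D.adj u v)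
  loopless := by
    intro v h
    rcases h with ⟨_, _, h⟩ | ⟨_, h⟩ <;> exact D.loopless v h
  asymm := by
    rintro u v (⟨hu, hv, h⟩ | ⟨h1, h⟩) (⟨hv', hu', h'⟩ | ⟨h2, h'⟩)
    · exact D.asymm u v h' h
    · rcases h2 with h2 | h2
      · exact h2 hv
      · exact h2 hu
    · rcases h1 with h1 | h1
      · exact h1 hu'
      · exact h1 hv'
    · exact D.asymm u v h h'

/-- Successively invert each set of a list. -/
def invertList (D : OGraph V) (L : List (Set V)) : OGraph V :=
  L.foldl invert D

/-- An oriented graph is acyclic if it has no directed cycle. -/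
def Acyclic (D : OGraph V) : Prop :=
  ∀ v, ¬ Relation.TransGen D.adj v v

/-- The inversion number: the least length of a decycling family. -/
noncomputable def inv (D : OGraph V) : ℕ :=
  sInf {m | ∃ L : List (Set V), L.length = m ∧ (D.invertList L).Acyclic}

/-- A tournament has exactly one arc between any two distinct vertices. -/
def IsTournament (D : OGraph V) : Prop :=
  ∀ u v, u ≠ v → D.adj u v ∨ D.adj v u

/-- Reversing every arc. -/
def reverse (D : OGraph V) : OGraph V where
  adj u v := D.adj v u
  loopless v h := D.loopless v h
  asymm u v h h2 := D.asymm u v h2 h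

/-- The dijoin `D₁ → D₂`: disjoint union plus all arcs from `D₁` to `D₂`. -/
def dijoin (D₁ : OGraph V₁) (D₂ : OGraph V₂) : OGraph (V₁ ⊕ V₂) where
  adj x y :=
    match x, y with
    | .inl u, .inl v => D₁.adj u v
    | .inr u, .inr v => D₂.adj u v
    | .inl _, .inr _ => True
    | .inr _, .inl _ => False
  loopless := by
    rintro (v | v) h
    · exact D₁.loopless v h
    · exact D₂.loopless v h
  asymm := by
    rintro (u | u) (v | v) h h'
    · exact D₁.asymm u v h h'
    · exact h'
    · exact h
    · exact D₂.asymm u v h h'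

/-- `M` is a decycling matrix for `D`: a symmetric `F₂`-matrix such that reversing
all arcs `uv` with `M u v = 1` yields an acyclic oriented graph. -/
def IsDecyclingMatrix (D : OGraph V) (M : Matrix V V (ZMod 2)) : Prop :=
  M.IsSymm ∧
    ∀ v, ¬ Relation.TransGen
      (fun u w => (M u w = 1 ∧ D.adj w u) ∨ (M u w ≠ 1 ∧ D.adj u w)) v v

/-- The tournament minimum rank: the least rank of a decycling matrix. -/
noncomputable def tmr [Fintype V] (D : OGraph V) : ℕ :=
  sInf {r | ∃ M : Matrix V V (ZMod 2), D.IsDecyclingMatrix M ∧ M.rank = r}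

end OGraph

open OGraph

/-!
Encode inversions `X₁, …, Xₘ` by the vectors `χ v = (𝟙[v ∈ Xᵢ])ᵢ ∈ 𝔽₂ᵐ`: the arc between `u` and
`v` ends up reversed iff `χ u ⬝ χ v = 1`. So `inv D ≤ m` iff `D` becomes acyclic once the pairs
flagged by some Gram matrix `C Cᵀ` with `m` columns are reversed.

Take an optimal family for `D₁ → D₂`, with vectors `a u` on `D₁` and rows `b v` of `B` on `D₂`,
and let `G` be the resulting acyclic reorientation of `D₂`. For each `u`, the vertices `v` whose
arc to `u` got reversed form a set closed under predecessors in `G` (otherwise `u → w → v → u` is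
a cycle), and inverting two such sets keeps `G` acyclic. As `inv D₁ ≥ 2`, the Gram matrix of the
`a u` is not of the form `y yᵀ`; a parity case analysis then yields `d₁, d₂` among the `a u` and
`0` such that `M = 1 + d₁ d₁ᵀ + d₂ d₂ᵀ` is not alternating and has a nonzero radical vector, hence
is a Gram matrix `K Kᵀ` with `m - 1` columns. The rows of `B K` have Gram matrix
`B M Bᵀ = B Bᵀ + (B d₁) (B d₁)ᵀ + (B d₂) (B d₂)ᵀ`: they encode `G` followed by the inversion of
the two closed sets `{v | b v ⬝ dᵢ = 1}`, so `m - 1` inversions decycle `D₂`.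
-/

theorem ZMod.eq_zero_or_eq_one (a : ZMod 2) : a = 0 ∨ a = 1 := by
  revert a; decide

theorem ZMod.add_eq_one_iff_ne (a b : ZMod 2) : a + b = 1 ↔ a ≠ b := by
  revert a b; decide

theorem ZMod.dotProduct_self_eq_one_dotProduct {κ : Type*} [Fintype κ] (v : κ → ZMod 2) :
    v ⬝ᵥ v = 1 ⬝ᵥ v :=
  Finset.sum_congr rfl fun i _ => by
    rw [Pi.one_apply, one_mul]; rcases ZMod.eq_zero_or_eq_one (v i) with h | h <;> simp [h]

theorem ZMod.indicator_setOf_eq_one {α : Type*} (x : α → ZMod 2) :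
    {a | x a = 1}.indicator 1 = x := by
  ext a
  rcases ZMod.eq_zero_or_eq_one (x a) with h | h <;> simp [Set.indicator, h]

theorem ZMod.setOf_indicator_eq_one {α : Type*} (X : Set α) :
    {a | X.indicator (1 : α → ZMod 2) a = 1} = X := by
  ext a
  by_cases h : a ∈ X <;> simp [h]

open Matrix

namespace Matrix

section Gram

variable {ι R : Type*} [CommRing R]

def IsGram (n : ℕ) (M : Matrix ι ι R) : Prop :=
  ∃ C : Matrix ι (Fin n) R, C * Cᵀ = M

theorem isGram_one_vecMulVec (y : ι → R) : IsGram 1 (vecMulVec y y) :=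
  ⟨replicateCol (Fin 1) y, by ext; simp [vecMulVec_apply, mul_apply]⟩

theorem IsGram.vecMulVec_self_add {n : ℕ} {M : Matrix ι ι R} (h : IsGram n M) (x : ι → R) :
    IsGram (n + 1) (vecMulVec x x + M) := by
  obtain ⟨C, rfl⟩ := h
  refine ⟨of fun p => vecCons (x p) (C p), ?_⟩
  ext p q
  exact cons_dotProduct_cons _ _ _ _

theorem add_vecMulVec_mul_transpose {κ : Type*} [Fintype κ] (C : Matrix ι κ R) {u : κ → R}
    (hu : u ⬝ᵥ u = 1) (hCu : C *ᵥ u = 0) (x : ι → R) :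
    (C + vecMulVec x u) * (C + vecMulVec x u)ᵀ = C * Cᵀ + vecMulVec x x := by
  rw [transpose_add, transpose_vecMulVec, Matrix.add_mul, Matrix.mul_add, Matrix.mul_add,
    mul_vecMulVec, hCu, vecMulVec_mul, vecMul_transpose, hCu, vecMulVec_mul_vecMulVec, hu]
  simp

/-- Row `p` of `C'` is `(0, 0, C p) + x p • (1, 1, 0) + y p • (1, 0, u)`: the vectors `(1, 1, 0)`
and `(1, 0, u)` span a hyperbolic plane, orthogonal to the rows of `C` and to `u' = (1, 1, u)`. -/
theorem exists_hyperbolic_extension [CharP R 2] {n : ℕ} (C : Matrix ι (Fin n) R) {u : Fin n → R}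
    (hu : u ⬝ᵥ u = 1) (hCu : C *ᵥ u = 0) (x y : ι → R) :
    ∃ (C' : Matrix ι (Fin (n + 2)) R) (u' : Fin (n + 2) → R),
      C' * C'ᵀ = C * Cᵀ + vecMulVec x y + vecMulVec y x ∧ u' ⬝ᵥ u' = 1 ∧ C' *ᵥ u' = 0 := by
  have hCu' (p : ι) : C p ⬝ᵥ u = 0 := congrFun hCu p
  refine ⟨of fun p => vecCons (x p + y p) (vecCons (x p) (C p + y p • u)),
    vecCons 1 (vecCons 1 u), ?_, ?_, ?_⟩
  · ext p q
    change vecCons _ (vecCons _ _) ⬝ᵥ vecCons _ (vecCons _ _) = C p ⬝ᵥ C q + x p * y q + y p * x q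
    simp only [cons_dotProduct_cons, add_dotProduct, dotProduct_add, smul_dotProduct,
      dotProduct_smul, hCu', dotProduct_comm u, hu, smul_eq_mul]
    linear_combination (x p * x q + y p * y q) * CharTwo.two_eq_zero (R := R)
  · simp only [cons_dotProduct_cons, hu]
    linear_combination CharTwo.two_eq_zero (R := R)
  · ext p
    change vecCons _ (vecCons _ _) ⬝ᵥ vecCons _ (vecCons _ _) = 0
    simp only [cons_dotProduct_cons, add_dotProduct, smul_dotProduct, hCu', hu, smul_eq_mul]
    linear_combination (x p + y p) * CharTwo.two_eq_zero (R := R)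

end Gram

section Realization

variable {ι : Type*} [DecidableEq ι]

theorem exists_gram_of_alternating (A : Finset ι) (M : Matrix ι ι (ZMod 2)) (hM : M.IsSymm)
    (hdiag : ∀ p, M p p = 0) (hA : ∀ p ∉ A, M p = 0) :
    ∃ (C : Matrix ι (Fin (A.card + 1)) (ZMod 2)) (u : Fin (A.card + 1) → ZMod 2),
      C * Cᵀ = M ∧ u ⬝ᵥ u = 1 ∧ C *ᵥ u = 0 := by
  induction A using Finset.strongInduction generalizing M with | H A ih => ?_
  by_cases hM0 : M = 0
  · exact ⟨0, Pi.single 0 1, by simp [hM0], by simp, zero_mulVec _⟩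
  obtain ⟨r, s, hrs⟩ : ∃ r s, M r s = 1 := by
    by_contra! h
    exact hM0 (ext fun r s => (ZMod.eq_zero_or_eq_one _).resolve_right (h r s))
  have hsr : M s r = 1 := by rw [hM.apply]; exact hrs
  have hr : r ∈ A := by_contra fun h => by simp [hA r h] at hrs
  have hs : s ∈ A := by_contra fun h => by simp [hA s h] at hsr
  have hs' : s ∈ A.erase r := Finset.mem_erase.2 ⟨by rintro rfl; simp [hdiag] at hrs, hs⟩
  -- Splitting off the hyperbolic plane on `r` and `s` kills the rows `r` and `s`.
  set M' := M - vecMulVec (M r) (M s) - vecMulVec (M s) (M r)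
  have hM' : M'.IsSymm := by
    simp only [M', IsSymm, transpose_sub, transpose_vecMulVec, hM.eq]; abel
  have hdiag' (p : ι) : M' p p = 0 := by
    simp only [M', sub_apply, vecMulVec_apply, hdiag]; ring_nf; reduce_mod_char
  have hA' : ∀ p ∉ (A.erase r).erase s, M' p = 0 := by
    intro p hp
    ext q
    simp only [Finset.mem_erase, not_and_or, not_not] at hp
    rcases hp with rfl | rfl | hp
    · simp [M', vecMulVec_apply, hrs, hdiag]
    · simp [M', vecMulVec_apply, hsr, hdiag]
    · have hpr : M r p = 0 := by rw [hM.apply]; simp [hA p hp]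
      have hps : M s p = 0 := by rw [hM.apply]; simp [hA p hp]
      simp [M', vecMulVec_apply, hA p hp, hpr, hps]
  obtain ⟨C, u, hC, hu, hCu⟩ :=
    ih _ ((Finset.erase_ssubset hs').trans (Finset.erase_ssubset hr)) M' hM' hdiag' hA'
  obtain ⟨C', u', hC', hu', hCu'⟩ := exists_hyperbolic_extension C hu hCu (M r) (M s)
  rw [← Finset.card_erase_add_one hr, ← Finset.card_erase_add_one hs']
  refine ⟨C', u', ?_, hu', hCu'⟩
  rw [hC', hC]
  simp only [M']
  abel

theorem isGram_of_diag_eq_one (A : Finset ι) (M : Matrix ι ι (ZMod 2)) (hM : M.IsSymm)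
    (hA : ∀ p ∉ A, M p = 0) {p₀ : ι} (hp₀ : M p₀ p₀ = 1) : IsGram A.card M := by
  induction A using Finset.strongInduction generalizing M p₀ with | H A ih => ?_
  have hp₀A : p₀ ∈ A := by_contra fun h => by simp [hA p₀ h] at hp₀
  set M' := M - vecMulVec (M p₀) (M p₀)
  have hM' : M'.IsSymm := by
    simp only [M', IsSymm, transpose_sub, transpose_vecMulVec, hM.eq]
  have hA' : ∀ p ∉ A.erase p₀, M' p = 0 := by
    intro p hp
    ext q
    simp only [Finset.mem_erase, not_and_or, not_not] at hp
    rcases hp with rfl | hp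
    · simp [M', vecMulVec_apply, hp₀]
    · have hp₀p : M p₀ p = 0 := by rw [hM.apply]; simp [hA p hp]
      simp [M', vecMulVec_apply, hA p hp, hp₀p]
  have hMM' : M = vecMulVec (M p₀) (M p₀) + M' := by simp [M']
  rw [hMM', ← Finset.card_erase_add_one hp₀A]
  by_cases hdiag : ∃ p, M' p p = 1
  · obtain ⟨p₁, hp₁⟩ := hdiag
    exact (ih _ (Finset.erase_ssubset hp₀A) M' hM' hA' hp₁).vecMulVec_self_add _
  · simp only [not_exists] at hdiag
    obtain ⟨C, u, hC, hu, hCu⟩ := exists_gram_of_alternating _ M' hM'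
      (fun p => (ZMod.eq_zero_or_eq_one _).resolve_right (hdiag p)) hA'
    exact ⟨C + vecMulVec (M p₀) u, by rw [add_vecMulVec_mul_transpose C hu hCu, hC, add_comm]⟩

theorem updateRow_one_mul_self {R : Type*} [CommRing R] [CharP R 2] [Fintype ι] {x : ι → R}
    {q : ι} (hq : x q = 1) :
    (1 : Matrix ι ι R).updateRow q x * (1 : Matrix ι ι R).updateRow q x = 1 := by
  rw [updateRow_mul, Matrix.one_mul]
  ext i j
  by_cases hi : i = q
  · subst hi
    simp only [vecMul, dotProduct, updateRow_apply, one_apply, mul_ite, mul_one, mul_zero]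
    rw [Fintype.sum_eq_add_sum_compl i, if_pos rfl, hq, one_mul,
      Finset.sum_congr rfl fun k hk => if_neg (Finset.mem_compl.1 hk ∘ Finset.mem_singleton.2),
      Finset.sum_ite_eq']
    by_cases hj : j = i
    · simp [hj, hq]
    · simp [hj, Ne.symm hj, CharTwo.add_self_eq_zero]
  · simp [updateRow_ne hi]

theorem updateRow_one_mul_mul_transpose {R : Type*} [CommRing R] [Fintype ι] {M : Matrix ι ι R}
    (hM : M.IsSymm) {x : ι → R} (hx : M *ᵥ x = 0) (q : ι) :
    (1 : Matrix ι ι R).updateRow q x * M * ((1 : Matrix ι ι R).updateRow q x)ᵀ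
      = (M.updateRow q 0).updateCol q 0 := by
  have : x ᵥ* M = 0 := by rw [← mulVec_transpose, hM.eq, hx]
  rw [updateRow_mul, Matrix.one_mul, this, ← updateCol_transpose, transpose_one, mul_updateCol,
    Matrix.mul_one, updateRow_mulVec, hx, zero_dotProduct]
  simp

theorem isGram_of_mulVec_eq_zero [Fintype ι] (M : Matrix ι ι (ZMod 2)) (hM : M.IsSymm)
    {x : ι → ZMod 2} (hx : M *ᵥ x = 0) {p q : ι} (hpq : p ≠ q) (hp : M p p = 1)
    (hq : x q = 1) : IsGram (Fintype.card ι - 1) M := by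
  set T := (1 : Matrix ι ι (ZMod 2)).updateRow q x
  have hN : T * M * Tᵀ = _ := updateRow_one_mul_mul_transpose hM hx q
  have hG := isGram_of_diag_eq_one (Finset.univ.erase q) (T * M * Tᵀ)
    (by simp [IsSymm, transpose_mul, hM.eq, Matrix.mul_assoc])
    (fun i hi => by
      rw [Finset.mem_erase, not_and_or, not_not] at hi
      rcases hi with rfl | hi
      · ext j; simp [hN, updateCol_apply]
      · simp at hi)
    (p₀ := p) (by simp [hN, hpq, hp, updateCol_ne, updateRow_ne])
  rw [Finset.card_erase_of_mem (Finset.mem_univ _), Finset.card_univ] at hG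
  obtain ⟨C, hC⟩ := hG
  refine ⟨T * C, ?_⟩
  calc T * C * (T * C)ᵀ = T * (C * Cᵀ) * Tᵀ := by simp only [transpose_mul, Matrix.mul_assoc]
    _ = (T * T) * M * (T * T)ᵀ := by rw [hC]; simp only [transpose_mul, Matrix.mul_assoc]
    _ = M := by rw [updateRow_one_mul_self hq, transpose_one, Matrix.one_mul, Matrix.mul_one]

end Realization

theorem mul_transpose_eq_vecMulVec_of_parity {V κ : Type*} [Fintype κ] (a : Matrix V κ (ZMod 2))
    (hodd : ∀ u, a u ⬝ᵥ a u = 1 → a u = 1)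
    (heven : ∀ u v, a u ⬝ᵥ a u = 0 → a v ⬝ᵥ a v = 0 → a u ⬝ᵥ a v ≠ 1) :
    a * aᵀ = vecMulVec (fun u => a u ⬝ᵥ a u) (fun u => a u ⬝ᵥ a u) := by
  ext u v
  change a u ⬝ᵥ a v = (a u ⬝ᵥ a u) * (a v ⬝ᵥ a v)
  rcases ZMod.eq_zero_or_eq_one (a u ⬝ᵥ a u) with hu | hu
  · rcases ZMod.eq_zero_or_eq_one (a v ⬝ᵥ a v) with hv | hv
    · rw [hu, zero_mul]
      exact (ZMod.eq_zero_or_eq_one _).resolve_right (heven u v hu hv)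
    · rw [hodd v hv, hu, dotProduct_comm, ← ZMod.dotProduct_self_eq_one_dotProduct, hu, zero_mul]
  · rw [hu, one_mul, hodd u hu, ← ZMod.dotProduct_self_eq_one_dotProduct]

section Parity

variable {ι : Type*} [Fintype ι] [DecidableEq ι]

theorem isGram_one_add_vecMulVec_add_vecMulVec {d₁ d₂ x : ι → ZMod 2}
    (hx : x + (d₁ ⬝ᵥ x) • d₁ + (d₂ ⬝ᵥ x) • d₂ = 0) {p q : ι} (hpq : p ≠ q)
    (hp : d₁ p = d₂ p) (hq : x q = 1) :
    IsGram (Fintype.card ι - 1) (1 + vecMulVec d₁ d₁ + vecMulVec d₂ d₂) := by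
  refine isGram_of_mulVec_eq_zero _ ?_ (x := x) ?_ hpq ?_ hq
  · simp [IsSymm, transpose_vecMulVec]
  · simpa [add_mulVec, vecMulVec_mulVec] using hx
  · simp only [add_apply, one_apply_eq, vecMulVec_apply, hp]
    ring_nf; reduce_mod_char

theorem isGram_of_dotProduct_self_eq_one {a : ι → ZMod 2} (ha : a ⬝ᵥ a = 1) (ha₁ : a ≠ 1) :
    IsGram (Fintype.card ι - 1) (1 + vecMulVec a a + vecMulVec 0 0) := by
  obtain ⟨p, hp⟩ : ∃ p, a p = 0 := by
    by_contra! h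
    exact ha₁ (funext fun p => (ZMod.eq_zero_or_eq_one _).resolve_left (h p))
  obtain ⟨q, hq⟩ : ∃ q, a q = 1 := by
    by_contra! h
    have : a = 0 := funext fun q => (ZMod.eq_zero_or_eq_one _).resolve_right (h q)
    simp [this] at ha
  refine isGram_one_add_vecMulVec_add_vecMulVec (x := a) ?_ (p := p)
    (by rintro rfl; simp [hp] at hq) (by simp [hp]) hq
  ext k
  simp [ha, CharTwo.add_self_eq_zero]

theorem isGram_of_dotProduct_eq_one {a b : ι → ZMod 2} (ha : a ⬝ᵥ a = 0) (hb : b ⬝ᵥ b = 0)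
    (hab : a ⬝ᵥ b = 1) :
    IsGram (Fintype.card ι - 1) (1 + vecMulVec a a + vecMulVec b b) := by
  have hba : b ⬝ᵥ a = 1 := by rw [dotProduct_comm, hab]
  obtain ⟨p, hp⟩ : ∃ p, a p = b p := by
    by_contra! h
    have hsum : a + b = 1 := funext fun p => (ZMod.add_eq_one_iff_ne _ _).2 (h p)
    have := congrArg (a ⬝ᵥ ·) hsum
    simp only [dotProduct_add, ha, hab, dotProduct_comm _ 1,
      ← ZMod.dotProduct_self_eq_one_dotProduct] at this
    exact zero_ne_one this.symm
  obtain ⟨q, hq⟩ : ∃ q, (a + b) q = 1 := by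
    by_contra! h
    have : a = b := funext fun q => not_not.1 (mt (ZMod.add_eq_one_iff_ne _ _).2 (h q))
    simp [this, hb] at hab
  refine isGram_one_add_vecMulVec_add_vecMulVec (x := a + b) ?_ (p := p) ?_ hp hq
  · ext k
    simp only [dotProduct_add, ha, hb, hab, hba, Pi.add_apply, Pi.smul_apply, smul_eq_mul,
      Pi.zero_apply]
    ring_nf; reduce_mod_char
  · rintro rfl; simp [hp, CharTwo.add_self_eq_zero] at hq

theorem exists_isGram_of_ne_vecMulVec {V : Type*} (a : Matrix V ι (ZMod 2))
    (h : ∀ y : V → ZMod 2, a * aᵀ ≠ vecMulVec y y) :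
    ∃ d₁ ∈ Set.range a, ∃ d₂ ∈ insert 0 (Set.range a),
      IsGram (Fintype.card ι - 1) (1 + vecMulVec d₁ d₁ + vecMulVec d₂ d₂) := by
  by_cases hodd : ∃ u, a u ⬝ᵥ a u = 1 ∧ a u ≠ 1
  · obtain ⟨u, hu, hu₁⟩ := hodd
    exact ⟨a u, ⟨u, rfl⟩, 0, Set.mem_insert _ _, isGram_of_dotProduct_self_eq_one hu hu₁⟩
  by_cases heven : ∃ u v, a u ⬝ᵥ a u = 0 ∧ a v ⬝ᵥ a v = 0 ∧ a u ⬝ᵥ a v = 1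
  · obtain ⟨u, v, hu, hv, huv⟩ := heven
    exact ⟨a u, ⟨u, rfl⟩, a v, Set.mem_insert_of_mem _ ⟨v, rfl⟩,
      isGram_of_dotProduct_eq_one hu hv huv⟩
  push Not at hodd heven
  exact absurd (mul_transpose_eq_vecMulVec_of_parity a hodd heven) (h _)

end Parity

end Matrix

namespace Relation

variable {α : Type*}

def IsAcyclic (r : α → α → Prop) : Prop :=
  ∀ a, ¬ TransGen r a a

def PredClosed (r : α → α → Prop) (S : Set α) : Prop :=
  ∀ a b, r a b → b ∈ S → a ∈ S

def reorient (r : α → α → Prop) (F : Matrix α α (ZMod 2)) : α → α → Prop :=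
  fun a b => if F a b = 1 then r b a else r a b

theorem IsAcyclic.comap {β : Type*} {r : α → α → Prop} {s : β → β → Prop} (hs : IsAcyclic s)
    (f : α → β) (h : ∀ a b, r a b → s (f a) (f b)) : IsAcyclic r :=
  fun a ha => hs (f a) (ha.lift f h)

theorem isAcyclic_of_map_lt {β : Type*} [Preorder β] {r : α → α → Prop} (f : α → β)
    (h : ∀ a b, r a b → f a < f b) : IsAcyclic r := fun a ha => by
  have := ha.lift f h
  rw [transGen_eq_self] at this
  exact lt_irrefl _ this

/-- A cycle of `r` stays on one level of `f`, where it is a cycle of `s` or of its converse. -/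
theorem IsAcyclic.of_levels {r s : α → α → Prop} (hs : IsAcyclic s) (f : α → ℕ) (c : ℕ → Prop)
    [DecidablePred c]
    (h : ∀ a b, r a b → f a < f b ∨ f a = f b ∧ if c (f a) then s b a else s a b) :
    IsAcyclic r := by
  have key : ∀ a b, TransGen r a b →
      f a < f b ∨ f a = f b ∧ if c (f a) then TransGen s b a else TransGen s a b := by
    intro a b hab
    induction hab with
    | single hab =>
      rcases h _ _ hab with h' | ⟨h', h''⟩
      · exact .inl h'
      · refine .inr ⟨h', ?_⟩
        split_ifs at h'' ⊢ <;> exact .single h''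
    | tail _ hbc ih =>
      rcases h _ _ hbc with h' | ⟨h', h''⟩
      · exact .inl (by omega)
      · rcases ih with ih | ⟨ih, ih'⟩
        · exact .inl (by omega)
        · refine .inr ⟨ih.trans h', ?_⟩
          rw [← ih] at h''
          split_ifs at ih' h'' ⊢
          · exact .head h'' ih'
          · exact .tail ih' h''
  intro a ha
  rcases key a a ha with h' | ⟨-, h'⟩
  · exact lt_irrefl _ h'
  · split_ifs at h' <;> exact hs a h'

theorem reorient_zero (r : α → α → Prop) : reorient r 0 = r := by
  ext a b; simp [reorient]

theorem reorient_reorient (r : α → α → Prop) {F : Matrix α α (ZMod 2)} (hF : F.IsSymm)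
    (F' : Matrix α α (ZMod 2)) : reorient (reorient r F) F' = reorient r (F + F') := by
  ext a b
  simp only [reorient, Matrix.add_apply, hF.apply]
  rcases ZMod.eq_zero_or_eq_one (F a b) with h | h <;>
    rcases ZMod.eq_zero_or_eq_one (F' a b) with h' | h' <;> simp [h, h']

theorem IsAcyclic.reorient_vecMulVec_add_vecMulVec {G : α → α → Prop} (hG : IsAcyclic G)
    {x₁ x₂ : α → ZMod 2} (h₁ : PredClosed G {a | x₁ a = 1}) (h₂ : PredClosed G {a | x₂ a = 1}) :
    IsAcyclic (reorient G (vecMulVec x₁ x₁ + vecMulVec x₂ x₂)) := by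
  -- Level `0`: in exactly one of the two sets, where every arc is reversed; level `1`: in both;
  -- level `2`: in neither.
  refine hG.of_levels (fun a => if x₁ a + x₂ a = 1 then 0 else if x₁ a = 1 then 1 else 2)
    (· = 0) fun a b hab => ?_
  simp only [reorient, Matrix.add_apply, vecMulVec_apply] at hab
  have := h₁ a b; have := h₁ b a; have := h₂ a b; have := h₂ b a
  rcases ZMod.eq_zero_or_eq_one (x₁ a) with ha₁ | ha₁ <;>
  rcases ZMod.eq_zero_or_eq_one (x₂ a) with ha₂ | ha₂ <;>
  rcases ZMod.eq_zero_or_eq_one (x₁ b) with hb₁ | hb₁ <;>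
  rcases ZMod.eq_zero_or_eq_one (x₂ b) with hb₂ | hb₂ <;>
  simp_all

end Relation

namespace OGraph

open Relation

variable {V V₁ V₂ : Type}

noncomputable def flipMatrix (L : List (Set V)) : Matrix V V (ZMod 2) :=
  (L.map fun X => vecMulVec (X.indicator 1) (X.indicator 1)).sum

theorem adj_invert (D : OGraph V) (X : Set V) :
    (D.invert X).adj = reorient D.adj (vecMulVec (X.indicator 1) (X.indicator 1)) := by
  ext u v
  by_cases hu : u ∈ X <;> by_cases hv : v ∈ X <;> simp [invert, reorient, vecMulVec_apply, hu, hv]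

theorem adj_invertList (D : OGraph V) (L : List (Set V)) :
    (D.invertList L).adj = reorient D.adj (flipMatrix L) := by
  induction L generalizing D with
  | nil => simp [invertList, flipMatrix, reorient_zero]
  | cons X L ih =>
    rw [flipMatrix, List.map_cons, List.sum_cons, ← reorient_reorient, ← adj_invert]
    · exact ih (D.invert X)
    · simp [IsSymm, transpose_vecMulVec]

theorem flipMatrix_ofFn {t : ℕ} (C : Matrix V (Fin t) (ZMod 2)) :
    flipMatrix (List.ofFn fun i => {v | C v i = 1}) = C * Cᵀ := by
  ext u v
  simp [flipMatrix, List.map_ofFn, Function.comp_def, ZMod.indicator_setOf_eq_one (C · _),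
    List.sum_ofFn, Matrix.sum_apply, mul_apply, vecMulVec_apply]

theorem exists_invertList_of_isGram (D : OGraph V) {t : ℕ} {F : Matrix V V (ZMod 2)}
    (hF : IsGram t F) (h : IsAcyclic (reorient D.adj F)) :
    ∃ L : List (Set V), L.length = t ∧ (D.invertList L).Acyclic := by
  obtain ⟨C, rfl⟩ := hF
  refine ⟨List.ofFn fun i => {v | C v i = 1}, List.length_ofFn, ?_⟩
  rw [OGraph.Acyclic, adj_invertList, flipMatrix_ofFn]
  exact h

theorem inv_le_of_isGram (D : OGraph V) {t : ℕ} {F : Matrix V V (ZMod 2)} (hF : IsGram t F)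
    (h : IsAcyclic (reorient D.adj F)) : D.inv ≤ t :=
  Nat.sInf_le (D.exists_invertList_of_isGram hF h)

theorem exists_invertList_acyclic [Fintype V] (D : OGraph V) :
    ∃ L : List (Set V), (D.invertList L).Acyclic := by
  classical
  let g := Fintype.equivFin V
  let F : Matrix V V (ZMod 2) :=
    of fun u v => if D.adj u v ∧ g v < g u ∨ D.adj v u ∧ g u < g v then 1 else 0
  obtain ⟨C, -, hC, -⟩ := exists_gram_of_alternating Finset.univ F
    (by ext u v; simp only [F, transpose_apply, of_apply, or_comm])
    (fun u => by simp [F, D.loopless]) (by simp)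
  have hF : IsAcyclic (reorient D.adj F) := isAcyclic_of_map_lt g fun u v huv => by
    by_cases h : D.adj u v ∧ g v < g u ∨ D.adj v u ∧ g u < g v
    · simp only [reorient, F, of_apply, if_pos h] at huv
      exact (h.resolve_left fun h' => D.asymm _ _ h'.1 huv).2
    · simp only [reorient, F, of_apply, if_neg h, zero_ne_one, if_false] at huv
      have hne : g u ≠ g v := fun e => D.loopless u (g.injective e ▸ huv)
      exact lt_of_le_of_ne (not_lt.1 fun h' => h (.inl ⟨huv, h'⟩)) hne
  obtain ⟨L, -, hL⟩ := D.exists_invertList_of_isGram ⟨C, hC⟩ hF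
  exact ⟨L, hL⟩

theorem exists_isAcyclic_reorient [Fintype V] (D : OGraph V) :
    ∃ C : Matrix V (Fin D.inv) (ZMod 2), IsAcyclic (reorient D.adj (C * Cᵀ)) := by
  obtain ⟨L, hL⟩ := D.exists_invertList_acyclic
  obtain ⟨L, hlen, hL⟩ := Nat.sInf_mem
    (s := {m | ∃ L : List (Set V), L.length = m ∧ (D.invertList L).Acyclic}) ⟨_, L, rfl, hL⟩
  rw [inv, ← hlen]
  refine ⟨of fun v i => (L.get i).indicator 1 v, ?_⟩
  rw [← flipMatrix_ofFn]
  simp only [of_apply, ZMod.setOf_indicator_eq_one, List.ofFn_get, ← adj_invertList]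
  exact hL

theorem inv_le_of_predClosed (D : OGraph V) {κ : Type*} [Fintype κ] [DecidableEq κ]
    (B : Matrix V κ (ZMod 2)) (hB : IsAcyclic (reorient D.adj (B * Bᵀ))) {d₁ d₂ : κ → ZMod 2}
    (h₁ : PredClosed (reorient D.adj (B * Bᵀ)) {v | (B *ᵥ d₁) v = 1})
    (h₂ : PredClosed (reorient D.adj (B * Bᵀ)) {v | (B *ᵥ d₂) v = 1}) {n : ℕ}
    (hK : IsGram n (1 + vecMulVec d₁ d₁ + vecMulVec d₂ d₂)) : D.inv ≤ n := by
  obtain ⟨K, hK⟩ := hK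
  have hBK : B * K * (B * K)ᵀ
      = B * Bᵀ + (vecMulVec (B *ᵥ d₁) (B *ᵥ d₁) + vecMulVec (B *ᵥ d₂) (B *ᵥ d₂)) := by
    rw [transpose_mul, Matrix.mul_assoc, ← Matrix.mul_assoc K, hK]
    simp [Matrix.mul_add, Matrix.add_mul, mul_vecMulVec, vecMulVec_mul, vecMul_transpose, add_assoc]
  refine D.inv_le_of_isGram ⟨B * K, hBK⟩ ?_
  rw [← reorient_reorient _ (by simp [IsSymm, transpose_mul])]
  exact hB.reorient_vecMulVec_add_vecMulVec h₁ h₂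

theorem predClosed_reorient_dijoin (D₁ : OGraph V₁) (D₂ : OGraph V₂)
    {F : Matrix (V₁ ⊕ V₂) (V₁ ⊕ V₂) (ZMod 2)} (hF : F.IsSymm)
    (h : IsAcyclic (reorient (D₁.dijoin D₂).adj F)) (u : V₁) :
    PredClosed (reorient D₂.adj (F.submatrix .inr .inr)) {v | F (.inr v) (.inl u) = 1} := by
  intro w v hwv (hv : F (.inr v) (.inl u) = 1)
  refine by_contra fun (hw : F (.inr w) (.inl u) ≠ 1) => ?_
  refine h (.inl u) (.head (b := .inr w) ?_ (.head (b := .inr v) ?_ (.single ?_)))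
  · simp only [reorient, hF.apply (.inr w) (.inl u), hw, if_false]
    trivial
  · exact hwv
  · simp only [reorient, hv, if_true]
    trivial

theorem inv_add_one_le_inv_dijoin [Fintype V₁] [Fintype V₂] (D₁ : OGraph V₁) (D₂ : OGraph V₂)
    (h₁ : 2 ≤ D₁.inv) : D₂.inv + 1 ≤ (D₁.dijoin D₂).inv := by
  obtain ⟨C, hC⟩ := (D₁.dijoin D₂).exists_isAcyclic_reorient
  let A := C.submatrix Sum.inl id
  let B := C.submatrix Sum.inr id
  have hA : IsAcyclic (reorient D₁.adj (A * Aᵀ)) := hC.comap Sum.inl fun _ _ h => h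
  have hB : IsAcyclic (reorient D₂.adj (B * Bᵀ)) := hC.comap Sum.inr fun _ _ h => h
  have hdijoin := h₁.trans (D₁.inv_le_of_isGram ⟨A, rfl⟩ hA)
  have hA₁ (y : V₁ → ZMod 2) : A * Aᵀ ≠ vecMulVec y y := fun hy => by
    have := D₁.inv_le_of_isGram (isGram_one_vecMulVec y) (hy ▸ hA)
    omega
  have hclosed : ∀ d ∈ insert 0 (Set.range A),
      PredClosed (reorient D₂.adj (B * Bᵀ)) {v | (B *ᵥ d) v = 1} := by
    rintro _ (rfl | ⟨u, rfl⟩) w v _ hv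
    · simp at hv
    · exact predClosed_reorient_dijoin D₁ D₂ (by simp [IsSymm, transpose_mul]) hC u w v ‹_› hv
  obtain ⟨d₁, hd₁, d₂, hd₂, hK⟩ := exists_isGram_of_ne_vecMulVec A hA₁
  have := D₂.inv_le_of_predClosed B hB (hclosed d₁ (Set.mem_insert_of_mem _ hd₁))
    (hclosed d₂ hd₂) hK
  rw [Fintype.card_fin] at this
  omega

end OGraph

/-- For oriented graphs with `inv D₁ = 2` and `inv D₂ = k`,
`inv (D₁ → D₂) ≥ k + 1`. -/
theorem inv_dijoin_oriented_lower_bound {V₁ V₂ : Type} [Fintype V₁] [Fintype V₂]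
    (D₁ : OGraph V₁) (D₂ : OGraph V₂) (k : ℕ)
    (h₁ : D₁.inv = 2) (h₂ : D₂.inv = k) :
    k + 1 ≤ (D₁.dijoin D₂).inv :=
  h₂ ▸ inv_add_one_le_inv_dijoin D₁ D₂ h₁.ge
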